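/- arXiv:2202.11629 — 5 statements merged into one kernel-verified Lean document; each statement's English description precedes it below -/
import Mathlib

section
/- In a directed acyclic graph G, let A and B be nodes and Z a set of nodes, all of which are ancestors of some node D (with A, B, Z ⊆ Anc(D)). If p is a path from A to B that is active (d-connecting) given Z, then every node on p is an ancestor of D. -/
/-- A (possibly cyclic) directed graph is given by its edge relation `G`;
`Acyclic G` says it is a DAG. -/
def Acyclic {V : Type*} (G : V → V → Prop) : Prop := ∀ v, ¬ Relation.TransGen G v v

/-- A path in the graph: a duplicate-free list of vertices in which consecutive
vertices are joined by an edge in either direction. -/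
def IsPath {V : Type*} (G : V → V → Prop) (vs : List V) : Prop :=
  vs.Nodup ∧ vs.Chain' (fun a b => G a b ∨ G b a)

/-- `c` is a collider on the path `vs`: both adjacent path edges point into `c`. -/
def IsColliderOn {V : Type*} (G : V → V → Prop) (vs : List V) (c : V) : Prop :=
  ∃ a b, [a, c, b] <:+: vs ∧ G a c ∧ G b c

/-- `c` occurs as an internal non-collider on the path `vs`. -/
def IsNonColliderOn {V : Type*} (G : V → V → Prop) (vs : List V) (c : V) : Prop :=
  ∃ a b, [a, c, b] <:+: vs ∧ ¬(G a c ∧ G b c)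

/-- `c` is a fork node on the path `vs`: both adjacent path edges point away from `c`. -/
def IsForkOn {V : Type*} (G : V → V → Prop) (vs : List V) (c : V) : Prop :=
  ∃ a b, [a, c, b] <:+: vs ∧ G c a ∧ G c b

/-- A path is active (d-connecting) given `Z` if every internal collider is an
ancestor of some node of `Z` and every internal non-collider avoids `Z`. -/
def ActiveGiven {V : Type*} (G : V → V → Prop) (vs : List V) (Z : Set V) : Prop :=
  (∀ a c b, [a, c, b] <:+: vs → G a c → G b c → ∃ z ∈ Z, Relation.ReflTransGen G c z) ∧
  (∀ a c b, [a, c, b] <:+: vs → ¬(G a c ∧ G b c) → c ∉ Z)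

/-- Parents of a node. -/
def Pa {V : Type*} (G : V → V → Prop) (d : V) : Set V := {w | G w d}

/-- The family of a node: its parents together with itself. -/
def Fa {V : Type*} (G : V → V → Prop) (d : V) : Set V := Pa G d ∪ {d}

/-- `a` is d-connected to `b` given `Z`: some active path joins them. -/
def DConn {V : Type*} (G : V → V → Prop) (a b : V) (Z : Set V) : Prop :=
  ∃ vs, IsPath G vs ∧ vs.head? = some a ∧ vs.getLast? = some b ∧ ActiveGiven G vs Z

lemma activeGiven_tail {V : Type*} {G : V → V → Prop} {Z : Set V} {x : V} {l : List V}
    (h : ActiveGiven G (x :: l) Z) : ActiveGiven G l Z := by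
  refine ⟨fun a c b hinf => h.1 a c b (hinf.trans (List.suffix_cons x l).isInfix),
    fun a c b hinf => h.2 a c b (hinf.trans (List.suffix_cons x l).isInfix)⟩

lemma forwardAux {V : Type*} {G : V → V → Prop} {D : V} {Z : Set V}
    (hZ : ∀ z ∈ Z, Relation.ReflTransGen G z D) :
    ∀ (rest : List V) (x y : V),
      (x :: y :: rest).Chain' (fun a b => G a b ∨ G b a) →
      ActiveGiven G (x :: y :: rest) Z →
      (∀ b, (x :: y :: rest).getLast? = some b → Relation.ReflTransGen G b D) →
      G x y → Relation.ReflTransGen G x D := by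
  intro rest
  induction rest with
  | nil =>
    intro x y _ _ hlast hxy
    have hy := hlast y (by simp)
    exact Relation.ReflTransGen.head hxy hy
  | cons b rest' ih =>
    intro x y hchain hact hlast hxy
    rcases hchain with _ | _ | ⟨hxy', hchain'⟩
    have hyb : G y b ∨ G b y := by
      rcases hchain' with _ | _ | ⟨h, _⟩; exact h
    rcases hyb with hyb | hby
    · -- continue forward
      have hy : Relation.ReflTransGen G y D := by
        refine ih y b hchain' (activeGiven_tail hact) ?_ hyb
        intro c hc
        exact hlast c (by rw [List.getLast?_cons_cons]; exact hc)
      exact Relation.ReflTransGen.head hxy hy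
    · -- collider at y
      obtain ⟨z, hzZ, hyz⟩ := hact.1 x y b ⟨[], rest', rfl⟩ hxy hby
      exact Relation.ReflTransGen.head hxy (hyz.trans (hZ z hzZ))

lemma mainAux {V : Type*} {G : V → V → Prop} {D : V} {Z : Set V}
    (hZ : ∀ z ∈ Z, Relation.ReflTransGen G z D) :
    ∀ (vs : List V),
      vs.Chain' (fun a b => G a b ∨ G b a) →
      ActiveGiven G vs Z →
      (∀ a, vs.head? = some a → Relation.ReflTransGen G a D) →
      (∀ b, vs.getLast? = some b → Relation.ReflTransGen G b D) →
      ∀ v ∈ vs, Relation.ReflTransGen G v D := by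
  intro vs
  induction vs with
  | nil => intro _ _ _ _ v hv; simp at hv
  | cons a t ih =>
    intro hchain hact hhead hlast v hv
    rw [List.mem_cons] at hv
    rcases hv with rfl | hv
    · exact hhead v rfl
    · -- v ∈ t; handle t's shape
      rcases t with _ | ⟨c, rest⟩
      · simp at hv
      · -- show c is an ancestor of D
        have hac : G a c ∨ G c a := by
          rcases hchain with _ | _ | ⟨h, _⟩; exact h
        have hchain' : (c :: rest).Chain' (fun a b => G a b ∨ G b a) := by
          rcases hchain with _ | _ | ⟨_, h⟩; exact h
        have hlast' : ∀ b, (c :: rest).getLast? = some b → Relation.ReflTransGen G b D := by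
          intro b hb
          exact hlast b (by rw [List.getLast?_cons_cons]; exact hb)
        have hc : Relation.ReflTransGen G c D := by
          rcases hac with hac | hca
          · rcases rest with _ | ⟨b, rest'⟩
            · exact hlast' c rfl
            · have hcb : G c b ∨ G b c := by
                rcases hchain' with _ | _ | ⟨h, _⟩; exact h
              rcases hcb with hcb | hbc
              · exact forwardAux hZ rest' c b hchain' (activeGiven_tail hact) hlast' hcb
              · obtain ⟨z, hzZ, hcz⟩ := hact.1 a c b ⟨[], rest', rfl⟩ hac hbc
                exact hcz.trans (hZ z hzZ)
          · exact Relation.ReflTransGen.head hca (hhead a rfl)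
        refine ih hchain' (activeGiven_tail hact) ?_ hlast' v hv
        intro a' ha'; rw [List.head?_cons, Option.some_inj] at ha'; subst ha'; exact hc

/-- Active paths between ancestors of `D` given ancestors of `D` contain only
ancestors of `D`. -/
theorem stmt_2 {V : Type*} (G : V → V → Prop) (hG : Acyclic G)
    (D A B : V) (Z : Set V)
    (hA : Relation.ReflTransGen G A D) (hB : Relation.ReflTransGen G B D)
    (hZ : ∀ z ∈ Z, Relation.ReflTransGen G z D)
    (vs : List V) (hpath : IsPath G vs)
    (hhead : vs.head? = some A) (hlast : vs.getLast? = some B)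
    (hactive : ActiveGiven G vs Z) :
    ∀ v ∈ vs, Relation.ReflTransGen G v D := by
  refine mainAux hZ vs hpath.2 hactive ?_ ?_
  · intro a ha; rw [hhead, Option.some_inj] at ha; subst ha; exact hA
  · intro b hb; rw [hlast, Option.some_inj] at hb; subst hb; exact hB
end

section
/- In a directed acyclic graph, suppose p : X ⇝ U is a path that is active given a set W with X ∉ W, and suppose p begins with an edge out of X (i.e., p is a front-door path X → … ). If p contains a node D ≠ X, then the suffix of p from D to U, prefixed by any edge Π → D from a parent Π of D, yields a path Π → D ⇝ U that is active given W ∪ {X} provided the suffix does not contain X and D ∉ W ∪ {X}. -/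
section Aux

variable {V : Type*} {G : V → V → Prop} {X : V} {W : Set V}

/-- Walking leftwards from `d` along the path, we either reach `X` or hit a
collider, giving an ancestor in `W ∪ {X}`. -/
lemma back_key (G : V → V → Prop) (X : V) (W : Set V) :
    ∀ (init : List V) (a d : V),
      (init ++ [a, d]).head? = some X →
      (init ++ [a, d]).Chain' (fun a b => G a b ∨ G b a) →
      (∀ p c q, [p, c, q] <:+: (init ++ [a, d]) → G p c → G q c →
        ∃ z ∈ W, Relation.ReflTransGen G c z) →
      G d a → ∃ z ∈ W ∪ {X}, Relation.ReflTransGen G d z := by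
  intro init
  induction init using List.reverseRecOn with
  | nil =>
      intro a d hhead _ _ hda
      simp only [List.nil_append, List.head?_cons, Option.some.injEq] at hhead
      exact ⟨a, Or.inr hhead, Relation.ReflTransGen.single hda⟩
  | append_singleton i' a' ih =>
      intro a d hhead hchain hcol hda
      have heq : i' ++ [a'] ++ [a, d] = i' ++ [a', a, d] := by simp
      have hedge : G a' a ∨ G a a' := by
        have hsuff : [a', a, d] <:+ i' ++ [a', a, d] := ⟨i', rfl⟩
        have := (hchain.suffix (heq ▸ hsuff))
        exact (List.isChain_cons_cons.mp this).1
      rcases hedge with h | h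
      · -- a is a collider on the path
        have hinf : [a', a, d] <:+: (i' ++ [a'] ++ [a, d]) := ⟨i', [], by simp⟩
        obtain ⟨z, hz, hcz⟩ := hcol a' a d hinf h hda
        exact ⟨z, Or.inl hz, Relation.ReflTransGen.head hda hcz⟩
      · -- edge a → a', recurse
        have hpre : (i' ++ [a', a]) <+: (i' ++ [a'] ++ [a, d]) := ⟨[d], by simp⟩
        have hhead' : (i' ++ [a', a]).head? = some X := by
          cases i' with
          | nil => simpa using hhead
          | cons x t => simpa using hhead
        obtain ⟨z, hz, hcz⟩ := ih a' a hhead' (hchain.prefix hpre)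
          (fun p c q hpcq => hcol p c q (hpcq.trans hpre.isInfix)) h
        exact ⟨z, hz, Relation.ReflTransGen.head hda hcz⟩

end Aux


/-- Truncation of an active front-door path at an intermediate node `D`,
prefixed by a parent `Π` of `D`, yields a path active given `W ∪ {X}`. -/
theorem stmt_4 {V : Type*} (G : V → V → Prop) (hG : Acyclic G)
    (X U D Pi : V) (W : Set V) (hXW : X ∉ W)
    (vs : List V) (hpath : IsPath G vs)
    (hhead : vs.head? = some X) (hlast : vs.getLast? = some U)
    (hactive : ActiveGiven G vs W)
    (hfront : ∃ b, [X, b] <+: vs ∧ G X b)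
    (hD : D ∈ vs) (hDX : D ≠ X)
    (hPi : G Pi D)
    (suf : List V) (hsuf : ∃ pre, vs = pre ++ suf) (hsufhead : suf.head? = some D)
    (hXsuf : X ∉ suf) (hDW : D ∉ W ∪ {X})
    (hPisuf : Pi ∉ suf) :
    IsPath G (Pi :: suf) ∧ (Pi :: suf).head? = some Pi ∧
      (Pi :: suf).getLast? = some U ∧ ActiveGiven G (Pi :: suf) (W ∪ {X}) := by
  obtain ⟨pre, rfl⟩ := hsuf
  obtain ⟨suf', rfl⟩ : ∃ l, suf = D :: l := by
    cases suf with
    | nil => simp at hsufhead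
    | cons x l =>
      have hx : x = D := by simpa using hsufhead
      refine ⟨l, ?_⟩
      rw [hx]
  have hchain := hpath.2
  have hsufsuf : (D :: suf') <:+ pre ++ D :: suf' := ⟨pre, rfl⟩
  -- pre is nonempty
  rcases List.eq_nil_or_concat pre with rfl | ⟨init, a, hpre⟩
  · have hXD : D = X := by simpa using hhead
    exact absurd hXD hDX
  rw [List.concat_eq_append] at hpre
  subst hpre
  have hveq : (init ++ [a]) ++ D :: suf' = init ++ [a, D] ++ suf' := by simp
  have hprefix : init ++ [a, D] <+: (init ++ [a]) ++ D :: suf' := ⟨suf', hveq.symm⟩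
  refine ⟨⟨List.nodup_cons.mpr ⟨hPisuf, hpath.1.sublist hsufsuf.sublist⟩, ?_⟩, rfl, ?_, ?_, ?_⟩
  · exact List.isChain_cons_cons.mpr ⟨Or.inl hPi, hchain.suffix hsufsuf⟩
  · rw [show (Pi :: D :: suf') = [Pi] ++ D :: suf' from rfl,
      List.getLast?_append_cons, ← List.getLast?_append_cons (init ++ [a])]
    exact hlast
  · -- collider condition
    intro p c q hinf hpc hqc
    obtain ⟨s, t, hst⟩ := hinf
    cases s with
    | cons Pi' s' =>
      rw [List.cons_append, List.cons_append] at hst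
      injection hst with h1 h2
      have hsub : [p, c, q] <:+: (D :: suf') := ⟨s', t, by simpa using h2⟩
      obtain ⟨z, hz, hcz⟩ := hactive.1 p c q (hsub.trans hsufsuf.isInfix) hpc hqc
      exact ⟨z, Or.inl hz, hcz⟩
    | nil =>
      simp only [List.nil_append, List.cons_append, List.cons.injEq] at hst
      obtain ⟨rfl, rfl, hst⟩ := hst
      -- c = D, p = Pi, suf' = q :: t
      by_cases hGa : G a c
      · have hinfv : [a, c, q] <:+: (init ++ [a]) ++ c :: suf' :=
          ⟨init, t, by rw [← hst]; simp⟩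
        obtain ⟨z, hz, hcz⟩ := hactive.1 a c q hinfv hGa hqc
        exact ⟨z, Or.inl hz, hcz⟩
      · have hedge : G a c ∨ G c a := by
          have h2 : List.Chain' (fun x y => G x y ∨ G y x) (a :: c :: suf') :=
            hchain.suffix ⟨init, by simp⟩
          exact (List.isChain_cons_cons.mp h2).1
        have hGca : G c a := hedge.resolve_left hGa
        refine back_key G X W init a c ?_ ?_ ?_ hGca
        · cases init with
          | nil => simpa using hhead
          | cons x t' => simpa using hhead
        · exact hchain.prefix hprefix
        · intro p' c' q' hinf' hp' hq'
          exact hactive.1 p' c' q' (hinf'.trans hprefix.isInfix) hp' hq'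
  · -- non-collider condition
    intro p c q hinf hn
    obtain ⟨s, t, hst⟩ := hinf
    cases s with
    | nil =>
      simp only [List.nil_append, List.cons_append, List.cons.injEq] at hst
      obtain ⟨rfl, rfl, hst⟩ := hst
      exact hDW
    | cons Pi' s' =>
      rw [List.cons_append, List.cons_append] at hst
      injection hst with h1 h2
      have hseq : s' ++ [p, c, q] ++ t = D :: suf' := by simpa using h2
      have hsub : [p, c, q] <:+: (D :: suf') := ⟨s', t, hseq⟩
      have hcW := hactive.2 p c q (hsub.trans hsufsuf.isInfix) hn
      have hcmem : c ∈ (D :: suf') := by rw [← hseq]; simp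
      rintro (hc | hc)
      · exact hcW hc
      · exact hXsuf (hc ▸ hcmem)
end

section
/- Let G be a DAG and let D, D' be nodes with D' an ancestor of D, D' ≠ D. Suppose p : X ⇝ U is a path active given Fa(D) \ {X} where X ∈ Pa(D), suppose D' lies on p with D' ≠ X, and let Π be a parent of D'. Then the path Π → D' ⇝ U (following the suffix of p from D' to U) is active given Fa(D), provided the suffix of p from D' to U does not contain X. Consequently Π is not d-separated from U given Fa(D). -/
/-- If a decision `D' ≠ X`, an ancestor of `D`, lies on a path `X ⇝ U` active
given `Fa(D) \ {X}` with `X ∈ Pa(D)`, then attaching any parent `Π` of `D'` to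
the suffix of the path from `D'` to `U` gives a path active given `Fa(D)`;
consequently `Π` is not d-separated from `U` given `Fa(D)`. -/
theorem stmt_7 {V : Type*} (G : V → V → Prop) (hG : Acyclic G)
    (D D' X U Pi : V)
    (hanc : Relation.ReflTransGen G D' D) (hne : D' ≠ D)
    (hX : X ∈ Pa G D)
    (vs : List V) (hpath : IsPath G vs)
    (hhead : vs.head? = some X) (hlast : vs.getLast? = some U)
    (hactive : ActiveGiven G vs (Fa G D \ {X}))
    (hD' : D' ∈ vs) (hD'X : D' ≠ X)
    (hPi : G Pi D')
    (suf : List V) (hsuf : ∃ pre, vs = pre ++ suf) (hsufhead : suf.head? = some D')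
    (hXsuf : X ∉ suf) (hPisuf : Pi ∉ suf) :
    IsPath G (Pi :: suf) ∧ (Pi :: suf).head? = some Pi ∧
      (Pi :: suf).getLast? = some U ∧ ActiveGiven G (Pi :: suf) (Fa G D) ∧
      DConn G Pi U (Fa G D) := by
  obtain ⟨pre, hvs⟩ := hsuf
  obtain ⟨suf', hsuf'⟩ : ∃ t, suf = D' :: t := by
    cases suf with
    | nil => simp at hsufhead
    | cons a t => simp at hsufhead; exact ⟨t, by rw [hsufhead]⟩
  subst hsuf'
  have hpre_ne : pre ≠ [] := by
    intro h
    subst h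
    simp only [List.nil_append] at hvs
    rw [hvs] at hhead
    simp at hhead
    exact hD'X hhead
  have hsufinfix : (D' :: suf') <:+: vs := ⟨pre, [], by simp [hvs]⟩
  have hsufsub : List.Sublist (D' :: suf') vs := hsufinfix.sublist
  have hnodup : (Pi :: D' :: suf').Nodup :=
    List.nodup_cons.mpr ⟨hPisuf, hpath.1.sublist hsufsub⟩
  have hchain : (Pi :: D' :: suf').Chain' (fun a b => G a b ∨ G b a) :=
    List.isChain_cons_cons.mpr ⟨Or.inl hPi, hpath.2.infix hsufinfix⟩
  have hlast2 : (D' :: suf').getLast? = some U := by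
    have h1 : (D' :: suf').getLast? = some ((D' :: suf').getLast (List.cons_ne_nil _ _)) :=
      List.getLast?_eq_getLast _
    rw [hvs, List.getLast?_append, h1] at hlast
    simpa [Option.or] using hlast.symm ▸ h1
  have hlast3 : (Pi :: D' :: suf').getLast? = some U := by
    have h : (Pi :: D' :: suf') = [Pi] ++ (D' :: suf') := rfl
    rw [h, List.getLast?_append, hlast2]
    rfl
  have hinfix_cases : ∀ a c b : V, [a, c, b] <:+: (Pi :: D' :: suf') →
      (a = Pi ∧ c = D' ∧ ∃ rest, suf' = b :: rest) ∨ [a, c, b] <:+: (D' :: suf') := by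
    rintro a c b ⟨s, t, hst⟩
    cases s with
    | nil =>
      simp only [List.nil_append, List.cons_append, List.cons.injEq] at hst
      exact Or.inl ⟨hst.1, hst.2.1, t, hst.2.2.symm⟩
    | cons x s' =>
      right
      refine ⟨s', t, ?_⟩
      simp only [List.cons_append, List.cons.injEq] at hst
      exact hst.2
  have hDFa : D ∈ Fa G D := Or.inr rfl
  obtain ⟨pre', a', hpre'⟩ := pre.eq_nil_or_concat.resolve_left hpre_ne
  have hactivegiven : ActiveGiven G (Pi :: D' :: suf') (Fa G D) := by
    constructor
    · intro a c b htriple hac hbc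
      rcases hinfix_cases a c b htriple with ⟨ha, hc, rest, hrest⟩ | hin
      · subst hc
        exact ⟨D, hDFa, hanc⟩
      · obtain ⟨z, hz, hreach⟩ := hactive.1 a c b (hin.trans hsufinfix) hac hbc
        exact ⟨z, hz.1, hreach⟩
    · intro a c b htriple hnc
      rcases hinfix_cases a c b htriple with ⟨ha, hc, rest, hrest⟩ | hin
      · rw [ha, hc] at hnc
        rw [hc]
        have htrip_vs : [a', D', b] <:+: vs := by
          refine ⟨pre', rest, ?_⟩
          simp [hvs, hpre', hrest]
        have hbD' : ¬ G b D' := fun h => hnc ⟨hPi, h⟩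
        by_cases hcol : G a' D' ∧ G b D'
        · exact absurd hcol.2 hbD'
        · have hout := hactive.2 a' D' b htrip_vs hcol
          intro hmem
          exact hout ⟨hmem, hD'X⟩
      · have hout := hactive.2 a c b (hin.trans hsufinfix) hnc
        intro hmem
        have hcmem : c ∈ D' :: suf' := hin.subset (by simp)
        have hcX : c ≠ X := fun h => hXsuf (h ▸ hcmem)
        exact hout ⟨hmem, hcX⟩
  have hispath : IsPath G (Pi :: D' :: suf') := ⟨hnodup, hchain⟩
  exact ⟨hispath, rfl, hlast3, hactivegiven,
    ⟨Pi :: D' :: suf', hispath, rfl, hlast3, hactivegiven⟩⟩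
end

section
/- In a DAG, let Z ⊆ Z' be conditioning sets. If a path p is active given Z' and no node of Z' \ Z is a non-collider on p, and every collider on p is an ancestor of Z, then p is active given Z. Conversely, if p is active given Z and no node of Z' \ Z appears as a non-collider on p, then p is active given Z'. -/
/-- Monotonicity of activeness in the conditioning set, for `Z ⊆ Z'`:
if `p` is active given `Z'`, no node of `Z' \ Z` is a non-collider on `p`, and
every collider on `p` is an ancestor of `Z`, then `p` is active given `Z`;
conversely, if `p` is active given `Z` and no node of `Z' \ Z` is a
non-collider on `p`, then `p` is active given `Z'`. -/
theorem stmt_11 {V : Type*} (G : V → V → Prop) (hG : Acyclic G)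
    (Z Z' : Set V) (hZZ : Z ⊆ Z') (vs : List V) (hpath : IsPath G vs) :
    ((ActiveGiven G vs Z' ∧ (∀ w ∈ Z' \ Z, ¬ IsNonColliderOn G vs w) ∧
        (∀ c, IsColliderOn G vs c → ∃ z ∈ Z, Relation.ReflTransGen G c z)) →
      ActiveGiven G vs Z) ∧
    ((ActiveGiven G vs Z ∧ (∀ w ∈ Z' \ Z, ¬ IsNonColliderOn G vs w)) →
      ActiveGiven G vs Z') := by
  constructor
  · rintro ⟨⟨hcol', hnon'⟩, hno, hcol⟩
    refine ⟨fun a c b hinf hac hbc => hcol c ⟨a, b, hinf, hac, hbc⟩,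
      fun a c b hinf hnc hcZ => hnon' a c b hinf hnc (hZZ hcZ)⟩
  · rintro ⟨⟨hcol, hnon⟩, hno⟩
    refine ⟨fun a c b hinf hac hbc => ?_, fun a c b hinf hnc hcZ' => ?_⟩
    · obtain ⟨z, hz, hr⟩ := hcol a c b hinf hac hbc
      exact ⟨z, hZZ hz, hr⟩
    · by_cases hcZ : c ∈ Z
      · exact hnon a c b hinf hnc hcZ
      · exact hno c ⟨hcZ', hcZ⟩ ⟨a, b, hinf, hnc⟩
end

section
/- Let G be a DAG, D a node with parent set Pa(D), and suppose p : X ⇝ U is active given Fa(D) \ {X} with X ∈ Pa(D), and let N be a node on p that is a parent of some ancestor decision D' of D (D' ∈ Anc(D), D' ≠ D). If N ∉ Pa(D) and the segment of p from N to U does not contain X or D, then the path Π → D' ← N ⇝ U (for any parent Π of D', following p from N to U) is active given Fa(D) at the collider D' (since D' ∈ Anc(D) ⊆ Anc(Fa(D))); hence Π is d-connected to U given Fa(D). -/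
/-- If a node `N` on a path `p : X ⇝ U` active given `Fa(D) \ {X}` is a parent
of an ancestor decision `D'` of `D` (`D' ≠ D`), `N ∉ Pa(D)`, and the segment of
`p` from `N` to `U` avoids `X` and `D`, then for any parent `Π` of `D'` the
path `Π → D' ← N ⇝ U` is active given `Fa(D)` (the collider `D'` being an
ancestor of `Fa(D)`); hence `Π` is d-connected to `U` given `Fa(D)`. -/
theorem stmt_17 {V : Type*} (G : V → V → Prop) (hG : Acyclic G)
    (D D' X U N Pi : V) (hX : X ∈ Pa G D)
    (hanc : Relation.ReflTransGen G D' D) (hne : D' ≠ D)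
    (vs : List V) (hpath : IsPath G vs)
    (hhead : vs.head? = some X) (hlast : vs.getLast? = some U)
    (hactive : ActiveGiven G vs (Fa G D \ {X}))
    (hN : N ∈ vs) (hND' : G N D') (hNPa : N ∉ Pa G D)
    (hPi : G Pi D')
    (suf : List V) (hsuf : ∃ pre, vs = pre ++ suf) (hsufhead : suf.head? = some N)
    (hXsuf : X ∉ suf) (hDsuf : D ∉ suf)
    (hD'suf : D' ∉ suf) (hPisuf : Pi ∉ suf) (hPiD' : Pi ≠ D') :
    IsPath G (Pi :: D' :: suf) ∧ IsColliderOn G (Pi :: D' :: suf) D' ∧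
      ActiveGiven G (Pi :: D' :: suf) (Fa G D) ∧ DConn G Pi U (Fa G D) := by

  obtain ⟨pre, hvs⟩ := hsuf
  obtain ⟨rest, rfl⟩ : ∃ rest, suf = N :: rest := by
    cases suf with
    | nil => cases hsufhead
    | cons h t =>
      simp only [List.head?_cons, Option.some.injEq] at hsufhead
      exact ⟨t, by rw [hsufhead]⟩
  have hsuffix : (N :: rest) <:+ vs := ⟨pre, hvs.symm⟩
  have hnodupsuf : (N :: rest).Nodup := hpath.1.sublist hsuffix.sublist
  have hchainsuf : (N :: rest).Chain' (fun a b => G a b ∨ G b a) :=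
    hpath.2.suffix hsuffix
  have hpath' : IsPath G (Pi :: D' :: N :: rest) := by
    constructor
    · refine List.nodup_cons.2 ⟨?_, List.nodup_cons.2 ⟨hD'suf, hnodupsuf⟩⟩
      intro h
      rcases List.mem_cons.1 h with rfl | h
      · exact hPiD' rfl
      · exact hPisuf h
    · exact List.isChain_cons_cons.2 ⟨Or.inl hPi, List.isChain_cons_cons.2 ⟨Or.inr hND', hchainsuf⟩⟩
  have hcol : IsColliderOn G (Pi :: D' :: N :: rest) D' :=
    ⟨Pi, N, ⟨[], rest, rfl⟩, hPi, hND'⟩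
  have hact : ActiveGiven G (Pi :: D' :: N :: rest) (Fa G D) := by
    constructor
    · rintro a c b ⟨l, r, hlr⟩ hac hbc
      rcases l with _ | ⟨x, _ | ⟨y, l⟩⟩
      · simp only [List.cons_append, List.nil_append, List.cons.injEq] at hlr
        obtain ⟨rfl, rfl, rfl, -⟩ := hlr
        exact ⟨D, Or.inr rfl, hanc⟩
      · simp only [List.cons_append, List.nil_append, List.cons.injEq] at hlr
        obtain ⟨rfl, rfl, rfl, -⟩ := hlr
        exact absurd (Relation.TransGen.tail (.single hND') hac) (hG _)
      · simp only [List.cons_append, List.cons.injEq] at hlr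
        obtain ⟨rfl, rfl, hlr⟩ := hlr
        have hinf : [a, c, b] <:+: vs :=
          (List.IsInfix.trans ⟨l, r, by simpa using hlr⟩ hsuffix.isInfix)
        obtain ⟨z, hz, hzr⟩ := hactive.1 a c b hinf hac hbc
        exact ⟨z, hz.1, hzr⟩
    · rintro a c b ⟨l, r, hlr⟩ hnc
      rcases l with _ | ⟨x, _ | ⟨y, l⟩⟩
      · simp only [List.cons_append, List.nil_append, List.cons.injEq] at hlr
        obtain ⟨rfl, rfl, rfl, -⟩ := hlr
        exact absurd ⟨hPi, hND'⟩ hnc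
      · simp only [List.cons_append, List.nil_append, List.cons.injEq] at hlr
        obtain ⟨rfl, rfl, rfl, -⟩ := hlr
        rintro (h | h)
        · exact hNPa h
        · rw [Set.mem_singleton_iff] at h
          exact hDsuf (h ▸ List.mem_cons_self)
      · simp only [List.cons_append, List.cons.injEq] at hlr
        obtain ⟨rfl, rfl, hlr⟩ := hlr
        have hinfsuf : [a, c, b] <:+: (N :: rest) := ⟨l, r, by simpa using hlr⟩
        have hinf : [a, c, b] <:+: vs := hinfsuf.trans hsuffix.isInfix
        have hcs : c ∈ N :: rest := hinfsuf.subset (by simp)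
        intro hc
        exact hactive.2 a c b hinf hnc ⟨hc, fun hx => hXsuf (hx ▸ hcs)⟩
  have hlsuf : (N :: rest).getLast? = some U := by
    rw [hvs, List.getLast?_append] at hlast
    rw [List.getLast?_eq_getLast (l := N :: rest) (by simp)] at hlast ⊢
    simpa using hlast
  refine ⟨hpath', hcol, hact, Pi :: D' :: N :: rest, hpath', rfl, ?_, hact⟩
  rw [List.getLast?_cons_cons, List.getLast?_cons_cons]
  exact hlsuf
end
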